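/- Let ε₁, ε₂ > 0. For λ > 0 and (b, h) ∈ (0, ∞)², set E^{(λ)}_{(b,h)}(ε₁, ε₂) = {(b', h') ∈ (0, ∞)² : b'³ ≤ λ^{ε₁} h' and b' ≥ λ^{-ε₂} b}. Then (log λ) · sup { ∫_{(0,∞)² \ E^{(λ)}_{(b,h)}(ε₁, ε₂)} p^{(∞)}((b,h),(b',h')) db' dh' : (b, h) ∈ (0, ∞)² with b³ ≤ λ^{ε₁} h } converges to 0 as λ → ∞. -/

import Mathlib

/-!
Split the escape region into `{b' < λ^{-ε₂} b}` and `{λ^{ε₁} h' < b'³}` and dominate `p^{(∞)}` on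
each part by a product of a function of `b'` and a function of `h'`. Both use that
`∫₀^h exp(-c (1/h' - 1/h)) / h'² dh' = 1/c`. On the first part `4 (b - b') b' ≤ 4 b λ^{-ε₂} b`,
giving mass at most `6 λ^{-2ε₂}`. On the second part `b³ ≤ λ^{ε₁} h` makes half of the exponent,
`(b³/3)(1/h' - 1/h)`, at least `λ^{ε₁} (b - b') / (3b)`, so that half of the exponential decays in
`b'` on the scale `b λ^{-ε₁}`, giving mass at most `36 λ^{-ε₁}`. Both bounds are polynomially small
in `λ`, which beats the factor `log λ`.
-/

open Real Filter MeasureTheory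

/-- The limiting transition density
`p^{(∞)}((b,h),(b',h')) = (4(b−b')b'/h'²) exp(−(2/3)b³(1/h'−1/h)) 1_{(0,b)×(0,h)}(b',h')`. -/
noncomputable def pinf (b h b' h' : ℝ) : ℝ :=
  4 * (b - b') * b' / h' ^ 2 * Real.exp (-(2 / 3 * b ^ 3 * (1 / h' - 1 / h))) *
    (if 0 < b' ∧ b' < b ∧ 0 < h' ∧ h' < h then 1 else 0)

/-- The good set `E^{(λ)}_{(b,h)}(ε₁, ε₂) ⊆ (0,∞)²`. -/
def Eset (lam ε₁ ε₂ b : ℝ) : Set (ℝ × ℝ) :=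
  {p | 0 < p.1 ∧ 0 < p.2 ∧ p.1 ^ 3 ≤ lam ^ ε₁ * p.2 ∧ lam ^ (-ε₂) * b ≤ p.1}

open Set Topology

noncomputable def invExpKernel (c h y : ℝ) : ℝ := exp (-(c * (1 / y - 1 / h))) / y ^ 2

lemma invExpKernel_nonneg (c h y : ℝ) : 0 ≤ invExpKernel c h y := by
  unfold invExpKernel; positivity

section invExpKernel

variable {c h : ℝ}

noncomputable def invExpKernelPrimitive (c h : ℝ) : ℝ → ℝ :=
  (Ioi 0).indicator fun y => c⁻¹ * exp (-(c * (1 / y - 1 / h)))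

lemma hasDerivAt_invExpKernelPrimitive (hc : c ≠ 0) {y : ℝ} (hy : 0 < y) :
    HasDerivAt (invExpKernelPrimitive c h) (invExpKernel c h y) y := by
  have hinv : HasDerivAt (fun y : ℝ => 1 / y) (-(y ^ 2)⁻¹) y := by
    simpa only [one_div] using hasDerivAt_inv hy.ne'
  have hexp := (((hinv.sub_const (1 / h)).const_mul c).neg.exp).const_mul c⁻¹
  refine (hexp.congr_deriv ?_).congr_of_eventuallyEq ?_
  · change c⁻¹ * (exp (-(c * (1 / y - 1 / h))) * -(c * -(y ^ 2)⁻¹)) = invExpKernel c h y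
    unfold invExpKernel; field_simp
  · filter_upwards [Ioi_mem_nhds hy] with z hz
    exact indicator_of_mem hz _

lemma continuousOn_invExpKernelPrimitive (hc : 0 < c) :
    ContinuousOn (invExpKernelPrimitive c h) (Ici 0) := by
  intro y hy
  rcases (mem_Ici.mp hy).eq_or_lt with rfl | hy
  · have hinv : Tendsto (fun y : ℝ => c * (1 / y - 1 / h)) (𝓝[>] 0) atTop := by
      simp_rw [one_div]
      exact (tendsto_atTop_add_const_right _ _ tendsto_inv_nhdsGT_zero).const_mul_atTop hc
    have hlim : Tendsto (invExpKernelPrimitive c h) (𝓝[>] 0) (𝓝 0) := by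
      have := (tendsto_exp_atBot.comp (tendsto_neg_atTop_atBot.comp hinv)).const_mul c⁻¹
      rw [mul_zero] at this
      refine this.congr' ?_
      filter_upwards [self_mem_nhdsWithin] with z hz
      exact (indicator_of_mem hz (fun y => c⁻¹ * exp (-(c * (1 / y - 1 / h))))).symm
    have h0 : invExpKernelPrimitive c h 0 = 0 := indicator_of_notMem (lt_irrefl 0) _
    refine continuousWithinAt_Ioi_iff_Ici.mp ?_
    rwa [ContinuousWithinAt, h0]
  · exact (hasDerivAt_invExpKernelPrimitive hc.ne' hy).continuousAt.continuousWithinAt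

lemma integrableOn_invExpKernel (hc : 0 < c) : IntegrableOn (invExpKernel c h) (Ioo 0 h) :=
  (intervalIntegral.integrableOn_deriv_of_nonneg
    ((continuousOn_invExpKernelPrimitive hc).mono Icc_subset_Ici_self)
    (fun _ hy => hasDerivAt_invExpKernelPrimitive hc.ne' hy.1)
    (fun y _ => invExpKernel_nonneg c h y)).mono_set Ioo_subset_Ioc_self

lemma integral_invExpKernel (hc : 0 < c) (hh : 0 < h) :
    ∫ y in Ioo 0 h, invExpKernel c h y = c⁻¹ := by
  rw [← integral_Ioc_eq_integral_Ioo, ← intervalIntegral.integral_of_le hh.le,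
    intervalIntegral.integral_eq_sub_of_hasDerivAt_of_le hh.le
      ((continuousOn_invExpKernelPrimitive hc).mono Icc_subset_Ici_self)
      (fun _ hy => hasDerivAt_invExpKernelPrimitive hc.ne' hy.1)
      ((intervalIntegrable_iff_integrableOn_Ioo_of_le hh.le).mpr (integrableOn_invExpKernel hc))]
  simp [invExpKernelPrimitive, hh]

end invExpKernel

section ExpIic

variable {a : ℝ}

lemma integrableOn_exp_mul_sub_Iic (ha : 0 < a) (c : ℝ) :
    IntegrableOn (fun x => exp (a * (x - c))) (Iic c) := by
  simp_rw [mul_sub, exp_sub]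
  exact (integrableOn_exp_mul_Iic ha c).div_const _

lemma integral_exp_mul_sub_Iic (ha : 0 < a) (c : ℝ) :
    ∫ x in Iic c, exp (a * (x - c)) = a⁻¹ := by
  simp_rw [mul_sub, exp_sub]
  rw [integral_div, integral_exp_mul_Iic ha, div_div_cancel_left' (exp_pos _).ne', inv_eq_one_div]

end ExpIic

section ProdDomination

variable {α β : Type*} [MeasurableSpace α] [MeasurableSpace β] {μ : Measure α} {ν : Measure β}
  [SFinite μ] [SFinite ν]

lemma setIntegral_le_of_le_mul_add_mul {s : Set (α × β)} (hs : MeasurableSet s)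
    {f : α × β → ℝ} {F₁ F₂ : α → ℝ} {G₁ G₂ : β → ℝ}
    (hF₁ : 0 ≤ F₁) (hF₂ : 0 ≤ F₂) (hG₁ : 0 ≤ G₁) (hG₂ : 0 ≤ G₂)
    (iF₁ : Integrable F₁ μ) (iF₂ : Integrable F₂ μ) (iG₁ : Integrable G₁ ν)
    (iG₂ : Integrable G₂ ν) (hf : ∀ p ∈ s, 0 ≤ f p)
    (hle : ∀ p ∈ s, f p ≤ F₁ p.1 * G₁ p.2 + F₂ p.1 * G₂ p.2) :
    ∫ p in s, f p ∂μ.prod ν ≤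
      (∫ x, F₁ x ∂μ) * (∫ y, G₁ y ∂ν) + (∫ x, F₂ x ∂μ) * ∫ y, G₂ y ∂ν := by
  have i₁ := iF₁.mul_prod iG₁
  have i₂ := iF₂.mul_prod iG₂
  rw [← integral_prod_mul, ← integral_prod_mul, ← integral_add i₁ i₂]
  calc ∫ p in s, f p ∂μ.prod ν
      ≤ ∫ p in s, F₁ p.1 * G₁ p.2 + F₂ p.1 * G₂ p.2 ∂μ.prod ν :=
        integral_mono_of_nonneg (ae_restrict_of_forall_mem hs hf) (i₁.add i₂).integrableOn
          (ae_restrict_of_forall_mem hs hle)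
    _ ≤ _ := setIntegral_le_integral (i₁.add i₂) (.of_forall fun p =>
        add_nonneg (mul_nonneg (hF₁ _) (hG₁ _)) (mul_nonneg (hF₂ _) (hG₂ _)))

end ProdDomination

section pinf

variable {b h x y : ℝ}

lemma pinf_eq_mul_invExpKernel (hx : 0 < x) (hxb : x < b) (hy : 0 < y) (hyh : y < h) :
    pinf b h x y = 4 * ((b - x) * x) * invExpKernel (2 / 3 * b ^ 3) h y := by
  rw [pinf, if_pos ⟨hx, hxb, hy, hyh⟩, invExpKernel]
  ring

lemma pinf_eq_zero (hxy : ¬(0 < x ∧ x < b ∧ 0 < y ∧ y < h)) : pinf b h x y = 0 := by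
  rw [pinf, if_neg hxy, mul_zero]

lemma pinf_nonneg (b h x y : ℝ) : 0 ≤ pinf b h x y := by
  by_cases hxy : 0 < x ∧ x < b ∧ 0 < y ∧ y < h
  · obtain ⟨hx, hxb, hy, hyh⟩ := hxy
    rw [pinf_eq_mul_invExpKernel hx hxb hy hyh]
    have := invExpKernel_nonneg (2 / 3 * b ^ 3) h y
    have : 0 ≤ (b - x) * x := mul_nonneg (by linarith) hx.le
    positivity
  · rw [pinf_eq_zero hxy]

lemma pinf_le_of_lt {r : ℝ} (hx : 0 < x) (hxb : x < b) (hxr : x < r) (hy : 0 < y) (hyh : y < h) :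
    pinf b h x y ≤ 4 * b * r * invExpKernel (2 / 3 * b ^ 3) h y := by
  rw [pinf_eq_mul_invExpKernel hx hxb hy hyh, mul_assoc 4 b]
  gcongr
  · exact invExpKernel_nonneg _ _ _
  all_goals linarith

/-- Compares `1/y - 1/h` with `L (1/x³ - 1/b³) ≥ L (b - x) / b⁴`. -/
lemma mul_sub_le_mul_inv_sub_inv {L : ℝ} (hx : 0 < x) (hxb : x ≤ b) (hy : 0 < y) (hh : 0 < h)
    (hxy : L * y < x ^ 3) (hbh : b ^ 3 ≤ L * h) :
    L / (3 * b) * (b - x) ≤ b ^ 3 / 3 * (1 / y - 1 / h) := by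
  have hb : 0 < b := hx.trans_le hxb
  have hy' : L / x ^ 3 ≤ 1 / y := by
    rw [div_le_div_iff₀ (by positivity) hy]; linarith
  have hh' : 1 / h ≤ L / b ^ 3 := by
    rw [div_le_div_iff₀ hh (by positivity)]; linarith
  have hcube : (b - x) / b ≤ (b ^ 3 - x ^ 3) / x ^ 3 := by
    rw [div_le_div_iff₀ hb (by positivity)]
    nlinarith [mul_nonneg (sub_nonneg.2 hxb) (sub_nonneg.2 (pow_le_pow_left₀ hx.le hxb 3)),
      mul_nonneg (mul_nonneg hb.le hx.le) (mul_nonneg (sub_nonneg.2 hxb) (add_pos hb hx).le)]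
  have hL : 0 ≤ L := by nlinarith [pow_pos hb 3]
  calc L / (3 * b) * (b - x) = L / 3 * ((b - x) / b) := by ring
    _ ≤ L / 3 * ((b ^ 3 - x ^ 3) / x ^ 3) := by gcongr
    _ = b ^ 3 / 3 * (L / x ^ 3 - L / b ^ 3) := by field_simp
    _ ≤ b ^ 3 / 3 * (1 / y - 1 / h) := by gcongr

lemma pinf_le_of_mul_lt_cube {L : ℝ} (hx : 0 < x) (hxb : x < b) (hy : 0 < y) (hyh : y < h)
    (hxy : L * y < x ^ 3) (hbh : b ^ 3 ≤ L * h) :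
    pinf b h x y ≤ 4 * b ^ 2 * exp (L / (3 * b) * (x - b)) * invExpKernel (b ^ 3 / 3) h y := by
  set t := 1 / y - 1 / h
  have hexp : exp (-(b ^ 3 / 3 * t)) ≤ exp (L / (3 * b) * (x - b)) := by
    have := mul_sub_le_mul_inv_sub_inv hx hxb.le hy (hy.trans hyh) hxy hbh
    exact exp_le_exp.2 (by linarith)
  have hsplit : invExpKernel (2 / 3 * b ^ 3) h y
      = exp (-(b ^ 3 / 3 * t)) * invExpKernel (b ^ 3 / 3) h y := by
    rw [invExpKernel, invExpKernel, mul_div_assoc', ← exp_add]; congr 2; ring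
  rw [pinf_eq_mul_invExpKernel hx hxb hy hyh, hsplit, ← mul_assoc]
  gcongr
  · exact invExpKernel_nonneg _ _ _
  · nlinarith

lemma pinf_le_indicator_mul_add {L r b h x y : ℝ} (hb : 0 ≤ b) (hx : 0 < x) (hy : 0 < y)
    (hbh : b ^ 3 ≤ L * h) (hxy : L * y < x ^ 3 ∨ x < r) :
    pinf b h x y ≤
      (Ioo 0 r).indicator (fun _ => 4 * b * r) x *
          (Ioo 0 h).indicator (invExpKernel (2 / 3 * b ^ 3) h) y +
        (Iic b).indicator (fun x => 4 * b ^ 2 * exp (L / (3 * b) * (x - b))) x *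
          (Ioo 0 h).indicator (invExpKernel (b ^ 3 / 3) h) y := by
  have hprod₁ : 0 ≤ (Ioo 0 r).indicator (fun _ => 4 * b * r) x *
      (Ioo 0 h).indicator (invExpKernel (2 / 3 * b ^ 3) h) y := by
    refine mul_nonneg (indicator_nonneg (fun x' hx' => ?_) x)
      (indicator_nonneg (fun _ _ => invExpKernel_nonneg _ _ _) y)
    have := hx'.1.trans hx'.2
    positivity
  have hprod₂ : 0 ≤ (Iic b).indicator (fun x => 4 * b ^ 2 * exp (L / (3 * b) * (x - b))) x *
      (Ioo 0 h).indicator (invExpKernel (b ^ 3 / 3) h) y :=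
    mul_nonneg (indicator_nonneg (fun _ _ => by positivity) x)
      (indicator_nonneg (fun _ _ => invExpKernel_nonneg _ _ _) y)
  by_cases hbox : 0 < x ∧ x < b ∧ 0 < y ∧ y < h
  · obtain ⟨-, hxb, -, hyh⟩ := hbox
    have hyIoo : y ∈ Ioo 0 h := ⟨hy, hyh⟩
    rcases hxy with hxy | hxr
    · refine le_add_of_nonneg_of_le hprod₁ ?_
      rw [indicator_of_mem (mem_Iic.mpr hxb.le), indicator_of_mem hyIoo]
      exact pinf_le_of_mul_lt_cube hx hxb hy hyh hxy hbh
    · refine le_add_of_le_of_nonneg ?_ hprod₂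
      rw [indicator_of_mem (show x ∈ Ioo 0 r from ⟨hx, hxr⟩), indicator_of_mem hyIoo]
      exact pinf_le_of_lt hx hxb hxr hy hyh
  · rw [pinf_eq_zero hbox]
    exact add_nonneg hprod₁ hprod₂

end pinf

lemma measurableSet_Eset (lam ε₁ ε₂ b : ℝ) : MeasurableSet (Eset lam ε₁ ε₂ b) := by
  unfold Eset; measurability

theorem integral_pinf_compl_Eset_le {lam ε₁ ε₂ b h : ℝ} (hlam : 0 < lam) (hb : 0 < b)
    (hh : 0 < h) (hbh : b ^ 3 ≤ lam ^ ε₁ * h) :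
    ∫ p in (Ioi (0 : ℝ) ×ˢ Ioi (0 : ℝ)) \ Eset lam ε₁ ε₂ b, pinf b h p.1 p.2
      ≤ 6 * (lam ^ (-ε₂)) ^ 2 + 36 / lam ^ ε₁ := by
  set L := lam ^ ε₁
  set r := lam ^ (-ε₂) * b
  have hL : 0 < L := rpow_pos_of_pos hlam _
  have hr : 0 < r := by positivity
  set F₁ : ℝ → ℝ := (Ioo 0 r).indicator fun _ => 4 * b * r
  set G₁ : ℝ → ℝ := (Ioo 0 h).indicator (invExpKernel (2 / 3 * b ^ 3) h)
  set F₂ : ℝ → ℝ := (Iic b).indicator fun x => 4 * b ^ 2 * exp (L / (3 * b) * (x - b))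
  set G₂ : ℝ → ℝ := (Ioo 0 h).indicator (invExpKernel (b ^ 3 / 3) h)
  have hF₁ : 0 ≤ F₁ := indicator_nonneg fun _ _ => by positivity
  have hG₁ : 0 ≤ G₁ := indicator_nonneg fun _ _ => invExpKernel_nonneg _ _ _
  have hF₂ : 0 ≤ F₂ := indicator_nonneg fun _ _ => by positivity
  have hG₂ : 0 ≤ G₂ := indicator_nonneg fun _ _ => invExpKernel_nonneg _ _ _
  rw [Measure.volume_eq_prod]
  refine (setIntegral_le_of_le_mul_add_mul
    ((measurableSet_Ioi.prod measurableSet_Ioi).diff (measurableSet_Eset lam ε₁ ε₂ b))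
    hF₁ hF₂ hG₁ hG₂
    ((integrableOn_const measure_Ioo_lt_top.ne).integrable_indicator measurableSet_Ioo)
    (IntegrableOn.integrable_indicator
      ((integrableOn_exp_mul_sub_Iic (by positivity) b).const_mul _) measurableSet_Iic)
    ((integrableOn_invExpKernel (by positivity)).integrable_indicator measurableSet_Ioo)
    ((integrableOn_invExpKernel (by positivity)).integrable_indicator measurableSet_Ioo)
    (fun p _ => pinf_nonneg b h p.1 p.2) ?_).trans_eq ?_
  · rintro ⟨x, y⟩ ⟨⟨hx, hy⟩, hbad⟩
    refine pinf_le_indicator_mul_add hb.le hx hy hbh ?_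
    by_contra! hgood
    exact hbad ⟨hx, hy, hgood.1, hgood.2⟩
  · simp only [F₁, G₁, F₂, G₂, integral_indicator measurableSet_Ioo,
      integral_indicator measurableSet_Iic, integral_const_mul, setIntegral_const]
    rw [integral_exp_mul_sub_Iic (by positivity), integral_invExpKernel (by positivity) hh,
      integral_invExpKernel (by positivity) hh, volume_real_Ioo_of_le hr.le, smul_eq_mul]
    field_simp
    ring

lemma tendsto_log_mul_escape_bound {ε₁ ε₂ : ℝ} (hε₁ : 0 < ε₁) (hε₂ : 0 < ε₂) :
    Tendsto (fun lam => log lam * (6 * (lam ^ (-ε₂)) ^ 2 + 36 / lam ^ ε₁)) atTop (𝓝 0) := by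
  have h₁ := (isLittleO_log_rpow_atTop (by positivity : 0 < 2 * ε₂)).tendsto_div_nhds_zero
  have h₂ := (isLittleO_log_rpow_atTop hε₁).tendsto_div_nhds_zero
  have hsum := (h₁.const_mul 6).add (h₂.const_mul 36)
  rw [mul_zero, mul_zero, add_zero] at hsum
  refine hsum.congr' ?_
  filter_upwards [eventually_gt_atTop 0] with x hx
  rw [← rpow_mul_natCast hx.le, Nat.cast_ofNat, neg_mul, mul_comm ε₂, rpow_neg hx.le]
  ring

/-- Uniformly over `(b,h) ∈ (0,∞)²` with `b³ ≤ λ^{ε₁} h`,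
`(log λ) ∫_{(0,∞)² \ E^{(λ)}_{(b,h)}(ε₁,ε₂)} p^{(∞)}((b,h),·) → 0` as `λ → ∞`. -/
theorem pinf_escape_neglig (ε₁ ε₂ : ℝ) (hε₁ : 0 < ε₁) (hε₂ : 0 < ε₂) :
    ∀ ε > (0 : ℝ), ∀ᶠ lam : ℝ in atTop, ∀ b h : ℝ, 0 < b → 0 < h → b ^ 3 ≤ lam ^ ε₁ * h →
      Real.log lam *
        ∫ p in (Set.Ioi (0 : ℝ) ×ˢ Set.Ioi (0 : ℝ)) \ Eset lam ε₁ ε₂ b, pinf b h p.1 p.2 < ε := by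
  intro ε hε
  filter_upwards [(tendsto_log_mul_escape_bound hε₁ hε₂).eventually (gt_mem_nhds hε),
    eventually_ge_atTop 1] with lam hlt hlam b h hb hh hbh
  calc log lam * ∫ p in (Ioi (0 : ℝ) ×ˢ Ioi (0 : ℝ)) \ Eset lam ε₁ ε₂ b, pinf b h p.1 p.2
      ≤ log lam * (6 * (lam ^ (-ε₂)) ^ 2 + 36 / lam ^ ε₁) :=
        mul_le_mul_of_nonneg_left (integral_pinf_compl_Eset_le (by linarith) hb hh hbh)
          (log_nonneg hlam)
    _ < ε := hlt
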